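/- arXiv:2004.11574 — 2 statements merged into one kernel-verified Lean document; each statement's English description precedes it below -/
import Mathlib

section
/- In the L^p setting, suppose a sequence (w_n) ⊂ L^q(Ω,dλ) satisfies G(w_n) ≤ C < ∞ for all n, where G(w) = ∫_Ω ((1/q)(w₊)^q − w μ) dλ with μ := γ^{q−1} d(μ₁⊗μ₂)/dλ. Then the sequence of positive parts ((w_n)₊) is bounded in L^q(Ω,dλ) and the sequence of negative parts ((w_n)₋) is bounded in L^1(Ω,dλ). -/
open MeasureTheory Set Filter Topology ENNReal

noncomputable section

/-- A Young's function: `Φ t = ∫₀ᵗ φ(s) ds` (as an extended-real-valued function on `[0,∞)`)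
for an increasing, lower semicontinuous `φ : [0,∞) → [0,∞]` with `φ 0 = 0` that is neither
identically zero nor identically infinite on `(0,∞)`. -/
def IsYoungFunction (Φ : ℝ → EReal) : Prop :=
  ∃ φ : ℝ → ℝ≥0∞,
    MonotoneOn φ (Set.Ici 0) ∧ LowerSemicontinuousOn φ (Set.Ici 0) ∧ φ 0 = 0 ∧
    (∃ t : ℝ, 0 < t ∧ φ t ≠ 0) ∧ (∃ t : ℝ, 0 < t ∧ φ t ≠ ∞) ∧
    ∀ t : ℝ, 0 ≤ t → Φ t = ((∫⁻ s in Set.Ioc (0:ℝ) t, φ s : ℝ≥0∞) : EReal)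

/-- A quasi-Young's function: convex and lower semicontinuous on `[0,∞)` with positive part
a Young's function. -/
def IsQuasiYoung (Θ : ℝ → EReal) : Prop :=
  (∀ x ∈ Set.Ici (0:ℝ), ∀ y ∈ Set.Ici (0:ℝ), ∀ a b : ℝ, 0 ≤ a → 0 ≤ b → a + b = 1 →
      Θ (a * x + b * y) ≤ (a : EReal) * Θ x + (b : EReal) * Θ y) ∧
  LowerSemicontinuousOn Θ (Set.Ici 0) ∧
  IsYoungFunction (fun t => max (Θ t) 0)

/-- Positive part of an extended real number, as an element of `ℝ≥0∞`. -/
def erealToENNReal (x : EReal) : ℝ≥0∞ :=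
  if x = ⊤ then ⊤ else ENNReal.ofReal x.toReal

/-- Integral of an `EReal`-valued function: positive part minus negative part (in `EReal`). -/
def eintegral {α : Type*} [MeasurableSpace α] (ν : Measure α) (g : α → EReal) : EReal :=
  ((∫⁻ x, erealToENNReal (g x) ∂ν : ℝ≥0∞) : EReal) -
    ((∫⁻ x, erealToENNReal (-(g x)) ∂ν : ℝ≥0∞) : EReal)

/-- Integrability of an `EReal`-valued function: both positive and negative parts have
finite integral. -/
def EIntegrable {α : Type*} [MeasurableSpace α] (ν : Measure α) (g : α → EReal) : Prop :=
  (∫⁻ x, erealToENNReal (g x) ∂ν) ≠ ∞ ∧ (∫⁻ x, erealToENNReal (-(g x)) ∂ν) ≠ ∞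

/-- The Luxemburg (quasi-)norm associated to a (quasi-)Young's function, valued in `ℝ≥0∞`. -/
def luxNorm {α : Type*} [MeasurableSpace α] (ν : Measure α) (Θ : ℝ → EReal) (f : α → ℝ) : ℝ≥0∞ :=
  ⨅ (γ : ℝ) (_ : 0 < γ) (_ : eintegral ν (fun x => Θ (|f x| / γ)) ≤ 1), ENNReal.ofReal γ

/-- Membership in the Orlicz space `L^Θ(ν)`: finiteness of the Luxemburg norm. -/
def MemOrlicz {α : Type*} [MeasurableSpace α] (ν : Measure α) (Θ : ℝ → EReal) (f : α → ℝ) : Prop :=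
  luxNorm ν Θ f < ∞

/-- Extension of a function on `[0,∞)` to `ℝ` by `+∞` on the negatives. -/
def erealExt (Θ : ℝ → EReal) : ℝ → EReal := fun t => if 0 ≤ t then Θ t else ⊤

/-- Convex (Fenchel) conjugate of an `EReal`-valued function on `ℝ`. -/
def econj (g : ℝ → EReal) : ℝ → EReal := fun s => ⨆ t : ℝ, ((s * t : ℝ) : EReal) - g t

/-- Superlinear growth at infinity: `Φ(t)/t → ∞` as `t → ∞`. -/
def Superlinear (Θ : ℝ → EReal) : Prop :=
  ∀ M : ℝ, ∃ T : ℝ, ∀ t : ℝ, T ≤ t → ((M * t : ℝ) : EReal) ≤ Θ t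

/-- Weak-* convergence of a sequence of measures: integrals of continuous functions converge. -/
def WeakStarTendsto {X : Type*} [MeasurableSpace X] [TopologicalSpace X]
    (πs : ℕ → Measure X) (π : Measure X) : Prop :=
  ∀ f : X → ℝ, Continuous f →
    Tendsto (fun k => ∫ z, f z ∂(πs k)) atTop (𝓝 (∫ z, f z ∂π))

/-- The functional `G(w) = ∫ ((1/q) (w₊)^q − w μ) dλ` with
`μ = γ^{q−1} d(μ₁⊗μ₂)/dλ`. -/
def Gfunctional {A B : Type*} [MeasurableSpace A] [MeasurableSpace B]
    (q γ : ℝ) (lam : Measure (A × B)) (μ₁ : Measure A) (μ₂ : Measure B)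
    (w : A × B → ℝ) : ℝ :=
  ∫ z, ((1 / q) * (max (w z) 0) ^ q -
    w z * (γ ^ (q - 1) * ((μ₁.prod μ₂).rnDeriv lam z).toReal)) ∂lam

/-!
Put `m = γ^(q-1) d(μ₁⊗μ₂)/dλ`. The density of a product measure is the product of the densities,
so `m ∈ L^p` and `m ≥ ε := γ^(q-1) δ²` a.e. Writing `∫ w m = ∫ w₊ m - ∫ w₋ m`, Hölder's
inequality followed by Young's inequality with weight `2` gives
`∫ w₊ m ≤ ‖w₊‖_q^q / (2q) + K` with `K = 2^(p/q) ‖m‖_p^p / p`, while `∫ w₋ m ≥ ε ‖w₋‖₁`. Hence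
`‖w₊‖_q^q / (2q) + ε ‖w₋‖₁ ≤ G(w) + K ≤ C + K`.
-/

theorem mul_le_rpow_div_add_rpow_div {p q x y t : ℝ} (hpq : p.HolderConjugate q)
    (hx : 0 ≤ x) (hy : 0 ≤ y) (ht : 0 < t) :
    x * y ≤ x ^ q / (t * q) + t ^ (p / q) * y ^ p / p := by
  have hs : 0 < t ^ (1 / q) := Real.rpow_pos_of_pos ht _
  have hyoung := Real.young_inequality_of_nonneg (div_nonneg hx hs.le) (mul_nonneg hs.le hy)
    hpq.symm
  have hsq : (t ^ (1 / q)) ^ q = t := by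
    rw [one_div, Real.rpow_inv_rpow ht.le hpq.symm.ne_zero]
  have hsp : (t ^ (1 / q)) ^ p = t ^ (p / q) := by
    rw [← Real.rpow_mul ht.le, one_div_mul_eq_div]
  have hxy : x / t ^ (1 / q) * (t ^ (1 / q) * y) = x * y := by field_simp
  rw [hxy, Real.div_rpow hx hs.le, Real.mul_rpow hs.le hy, hsq, hsp, div_div] at hyoung
  exact hyoung

namespace MeasureTheory

section ProductDensity

variable {A B : Type*} [MeasurableSpace A] [MeasurableSpace B]

theorem MemLp.mul_prod {ν₁ : Measure A} {ν₂ : Measure B} [SFinite ν₁] [SFinite ν₂]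
    {p : ℝ≥0∞} (hp0 : p ≠ 0) (hp : p ≠ ∞) {f : A → ℝ} {g : B → ℝ}
    (hf : MemLp f p ν₁) (hg : MemLp g p ν₂) :
    MemLp (fun z : A × B => f z.1 * g z.2) p (ν₁.prod ν₂) := by
  refine ⟨(hf.1.comp_quasiMeasurePreserving Measure.quasiMeasurePreserving_fst).mul
    (hg.1.comp_quasiMeasurePreserving Measure.quasiMeasurePreserving_snd), ?_⟩
  rw [eLpNorm_lt_top_iff_lintegral_rpow_enorm_lt_top hp0 hp]
  have hsplit : ∫⁻ z, ‖f z.1 * g z.2‖ₑ ^ p.toReal ∂ν₁.prod ν₂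
      = (∫⁻ x, ‖f x‖ₑ ^ p.toReal ∂ν₁) * ∫⁻ y, ‖g y‖ₑ ^ p.toReal ∂ν₂ := by
    simp_rw [enorm_mul, ENNReal.mul_rpow_of_nonneg _ _ ENNReal.toReal_nonneg]
    exact lintegral_prod_mul (hf.1.enorm.pow_const _) (hg.1.enorm.pow_const _)
  rw [hsplit]
  exact ENNReal.mul_lt_top (lintegral_rpow_enorm_lt_top_of_eLpNorm_lt_top hp0 hp hf.2)
    (lintegral_rpow_enorm_lt_top_of_eLpNorm_lt_top hp0 hp hg.2)

variable {lam₁ μ₁ : Measure A} {lam₂ μ₂ : Measure B}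
  [SigmaFinite lam₁] [SigmaFinite lam₂] [SigmaFinite μ₁] [SigmaFinite μ₂]

theorem rnDeriv_prod_ae_eq (h₁ : μ₁ ≪ lam₁) (h₂ : μ₂ ≪ lam₂) :
    (μ₁.prod μ₂).rnDeriv (lam₁.prod lam₂) =ᵐ[lam₁.prod lam₂]
      fun z => μ₁.rnDeriv lam₁ z.1 * μ₂.rnDeriv lam₂ z.2 := by
  have hprod : μ₁.prod μ₂ = (lam₁.prod lam₂).withDensity
      fun z => μ₁.rnDeriv lam₁ z.1 * μ₂.rnDeriv lam₂ z.2 := by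
    refine Measure.prod_eq fun s t hs ht => ?_
    rw [withDensity_apply _ (hs.prod ht), ← Measure.prod_restrict,
      lintegral_prod_mul (μ₁.measurable_rnDeriv lam₁).aemeasurable
        (μ₂.measurable_rnDeriv lam₂).aemeasurable,
      Measure.setLIntegral_rnDeriv h₁, Measure.setLIntegral_rnDeriv h₂]
  rw [hprod]
  exact Measure.rnDeriv_withDensity _ (by fun_prop)

theorem toReal_rnDeriv_prod_ae_eq (h₁ : μ₁ ≪ lam₁) (h₂ : μ₂ ≪ lam₂) :
    (fun z => ((μ₁.prod μ₂).rnDeriv (lam₁.prod lam₂) z).toReal) =ᵐ[lam₁.prod lam₂]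
      fun z => (μ₁.rnDeriv lam₁ z.1).toReal * (μ₂.rnDeriv lam₂ z.2).toReal :=
  (rnDeriv_prod_ae_eq h₁ h₂).mono fun z hz => by simp only [hz, toReal_mul]

theorem memLp_toReal_rnDeriv_prod (h₁ : μ₁ ≪ lam₁) (h₂ : μ₂ ≪ lam₂) {p : ℝ≥0∞} (hp0 : p ≠ 0)
    (hp : p ≠ ∞) (hd₁ : MemLp (fun x => (μ₁.rnDeriv lam₁ x).toReal) p lam₁)
    (hd₂ : MemLp (fun y => (μ₂.rnDeriv lam₂ y).toReal) p lam₂) :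
    MemLp (fun z => ((μ₁.prod μ₂).rnDeriv (lam₁.prod lam₂) z).toReal) p (lam₁.prod lam₂) :=
  (hd₁.mul_prod hp0 hp hd₂).ae_eq (toReal_rnDeriv_prod_ae_eq h₁ h₂).symm

theorem ae_mul_le_toReal_rnDeriv_prod (h₁ : μ₁ ≪ lam₁) (h₂ : μ₂ ≪ lam₂) {δ₁ δ₂ : ℝ}
    (hδ₁ : ∀ᵐ x ∂lam₁, δ₁ ≤ (μ₁.rnDeriv lam₁ x).toReal) (hδ₂0 : 0 ≤ δ₂)
    (hδ₂ : ∀ᵐ y ∂lam₂, δ₂ ≤ (μ₂.rnDeriv lam₂ y).toReal) :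
    ∀ᵐ z ∂lam₁.prod lam₂, δ₁ * δ₂ ≤ ((μ₁.prod μ₂).rnDeriv (lam₁.prod lam₂) z).toReal := by
  filter_upwards [toReal_rnDeriv_prod_ae_eq h₁ h₂, Measure.quasiMeasurePreserving_fst.ae hδ₁,
    Measure.quasiMeasurePreserving_snd.ae hδ₂] with z hz hz₁ hz₂
  rw [hz]
  exact mul_le_mul hz₁ hz₂ hδ₂0 toReal_nonneg

end ProductDensity

section Coercive

variable {α : Type*} [MeasurableSpace α] {ν : Measure α} {p q ε : ℝ} {m w : α → ℝ}

theorem MemLp.integrable_rpow_of_nonneg {f : α → ℝ} (hf : MemLp f (ENNReal.ofReal q) ν) (hq : 0 < q)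
    (hf0 : ∀ z, 0 ≤ f z) : Integrable (fun z => f z ^ q) ν := by
  have h := hf.integrable_norm_rpow (by simpa using hq) ofReal_ne_top
  simp_rw [toReal_ofReal hq.le, Real.norm_of_nonneg (hf0 _)] at h
  exact h

theorem integral_posPart_mul_le (hpq : p.HolderConjugate q) (hm0 : 0 ≤ᵐ[ν] m)
    (hm : MemLp m (ENNReal.ofReal p) ν) (hw : MemLp w (ENNReal.ofReal q) ν) :
    ∫ z, max (w z) 0 * m z ∂ν ≤
      (∫ z, max (w z) 0 ^ q ∂ν) / (2 * q) + 2 ^ (p / q) * (∫ z, m z ^ p ∂ν) / p := by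
  have hA : 0 ≤ ∫ z, max (w z) 0 ^ q ∂ν :=
    integral_nonneg fun z => Real.rpow_nonneg (le_max_right _ _) _
  have hM : 0 ≤ ∫ z, m z ^ p ∂ν :=
    integral_nonneg_of_ae (hm0.mono fun z hz => Real.rpow_nonneg hz _)
  calc ∫ z, max (w z) 0 * m z ∂ν
      ≤ (∫ z, max (w z) 0 ^ q ∂ν) ^ (1 / q) * (∫ z, m z ^ p ∂ν) ^ (1 / p) :=
        integral_mul_le_Lp_mul_Lq_of_nonneg hpq.symm (ae_of_all _ fun z => le_max_right _ _)
          hm0 hw.pos_part hm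
    _ ≤ ((∫ z, max (w z) 0 ^ q ∂ν) ^ (1 / q)) ^ q / (2 * q)
          + 2 ^ (p / q) * ((∫ z, m z ^ p ∂ν) ^ (1 / p)) ^ p / p :=
        mul_le_rpow_div_add_rpow_div hpq (by positivity) (by positivity) two_pos
    _ = _ := by
      rw [one_div, one_div, Real.rpow_inv_rpow hA hpq.symm.ne_zero,
        Real.rpow_inv_rpow hM hpq.ne_zero]

theorem AEStronglyMeasurable.integrable_of_integrable_mul_of_le {f : α → ℝ}
    (hf : AEStronglyMeasurable f ν) (hε : 0 < ε) (hεm : ∀ᵐ z ∂ν, ε ≤ m z) (hf0 : 0 ≤ᵐ[ν] f)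
    (hfm : Integrable (fun z => f z * m z) ν) : Integrable f ν := by
  refine (hfm.const_mul ε⁻¹).mono' hf ?_
  filter_upwards [hεm, hf0] with z hz hfz
  rw [Real.norm_of_nonneg hfz, le_inv_mul_iff₀ hε, mul_comm]
  exact mul_le_mul_of_nonneg_left hz hfz

theorem mul_integral_le_integral_mul (hεm : ∀ᵐ z ∂ν, ε ≤ m z) {f : α → ℝ} (hf0 : 0 ≤ᵐ[ν] f)
    (hf : Integrable f ν) (hfm : Integrable (fun z => f z * m z) ν) :
    ε * ∫ z, f z ∂ν ≤ ∫ z, f z * m z ∂ν := by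
  rw [← integral_const_mul]
  refine integral_mono_ae (hf.const_mul ε) hfm ?_
  filter_upwards [hεm, hf0] with z hz hfz
  rw [mul_comm]
  exact mul_le_mul_of_nonneg_left hz hfz

theorem integral_rpow_posPart_div_add_mul_integral_negPart_le (hpq : p.HolderConjugate q)
    (hε : 0 < ε) (hεm : ∀ᵐ z ∂ν, ε ≤ m z)
    (hm : MemLp m (ENNReal.ofReal p) ν) (hw : MemLp w (ENNReal.ofReal q) ν) :
    Integrable (fun z => max (-w z) 0) ν ∧
      (∫ z, max (w z) 0 ^ q ∂ν) / (2 * q) + ε * ∫ z, max (-w z) 0 ∂ν ≤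
        ∫ z, (1 / q * max (w z) 0 ^ q - w z * m z) ∂ν + 2 ^ (p / q) * (∫ z, m z ^ p ∂ν) / p := by
  have := hpq.symm.ennrealOfReal
  have hm0 : 0 ≤ᵐ[ν] m := hεm.mono fun z hz => hε.le.trans hz
  have hneg0 : 0 ≤ᵐ[ν] fun z => max (-w z) 0 := ae_of_all _ fun z => le_max_right _ _
  have hwm : Integrable (fun z => w z * m z) ν := hw.integrable_mul hm
  have hposm : Integrable (fun z => max (w z) 0 * m z) ν := hw.pos_part.integrable_mul hm
  have hnegm : Integrable (fun z => max (-w z) 0 * m z) ν := hw.neg_part.integrable_mul hm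
  have hneg := hw.neg_part.1.integrable_of_integrable_mul_of_le hε hεm hneg0 hnegm
  refine ⟨hneg, ?_⟩
  have hsplit : ∫ z, w z * m z ∂ν
      = ∫ z, max (w z) 0 * m z ∂ν - ∫ z, max (-w z) 0 * m z ∂ν := by
    rw [← integral_sub hposm hnegm]
    congr 1 with z
    rw [← sub_mul, max_zero_sub_max_neg_zero_eq_self]
  rw [integral_sub ((hw.pos_part.integrable_rpow_of_nonneg hpq.symm.pos
      fun z => le_max_right _ _).const_mul _) hwm,
    integral_const_mul, hsplit]
  have hpos_le := integral_posPart_mul_le hpq hm0 hm hw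
  have hneg_ge := mul_integral_le_integral_mul hεm hneg0 hneg hnegm
  have hhalf : 1 / q * (∫ z, max (w z) 0 ^ q ∂ν) = 2 * ((∫ z, max (w z) 0 ^ q ∂ν) / (2 * q)) := by
    field_simp
  linarith

theorem eLpNorm_posPart_le_and_eLpNorm_negPart_le (hpq : p.HolderConjugate q) (hε : 0 < ε)
    (hεm : ∀ᵐ z ∂ν, ε ≤ m z) (hm : MemLp m (ENNReal.ofReal p) ν)
    (hw : MemLp w (ENNReal.ofReal q) ν) {C : ℝ}
    (hC : ∫ z, (1 / q * max (w z) 0 ^ q - w z * m z) ∂ν ≤ C) :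
    eLpNorm (fun z => max (w z) 0) (ENNReal.ofReal q) ν ≤
        ENNReal.ofReal ((2 * q * (C + 2 ^ (p / q) * (∫ z, m z ^ p ∂ν) / p)) ^ q⁻¹) ∧
      eLpNorm (fun z => max (-w z) 0) 1 ν ≤
        ENNReal.ofReal ((C + 2 ^ (p / q) * (∫ z, m z ^ p ∂ν) / p) / ε) := by
  obtain ⟨hneg, hest⟩ := integral_rpow_posPart_div_add_mul_integral_negPart_le hpq hε hεm hm hw
  set K := 2 ^ (p / q) * (∫ z, m z ^ p ∂ν) / p
  have hq := hpq.symm.pos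
  have hA : 0 ≤ ∫ z, max (w z) 0 ^ q ∂ν :=
    integral_nonneg fun z => Real.rpow_nonneg (le_max_right _ _) _
  have hN : 0 ≤ ∫ z, max (-w z) 0 ∂ν := integral_nonneg fun z => le_max_right _ _
  constructor
  · rw [hw.pos_part.eLpNorm_eq_integral_rpow_norm (by simpa using hq) ofReal_ne_top,
      toReal_ofReal hq.le]
    simp_rw [Real.norm_of_nonneg (le_max_right _ 0)]
    gcongr
    have hA_le : (∫ z, max (w z) 0 ^ q ∂ν) / (2 * q) ≤ C + K := by
      linarith [mul_nonneg hε.le hN]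
    rwa [div_le_iff₀ (by positivity), mul_comm] at hA_le
  · rw [(memLp_one_iff_integrable.2 hneg).eLpNorm_eq_integral_rpow_norm one_ne_zero one_ne_top]
    simp_rw [toReal_one, inv_one, Real.rpow_one, Real.norm_of_nonneg (le_max_right _ 0)]
    gcongr
    rw [le_div_iff₀ hε, mul_comm]
    linarith [div_nonneg hA (by positivity : (0:ℝ) ≤ 2 * q)]

end Coercive

end MeasureTheory

theorem G_coercive_bounds_general
    (n : ℕ) (Ω₁ Ω₂ : Set (Fin n → ℝ))
    (lam₁ : Measure ↥Ω₁) (lam₂ : Measure ↥Ω₂)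
    [IsFiniteMeasure lam₁] [IsFiniteMeasure lam₂]
    (p q : ℝ) (hp : 1 < p) (hpq : 1 / p + 1 / q = 1)
    (μ₁ : Measure ↥Ω₁) (μ₂ : Measure ↥Ω₂)
    [IsProbabilityMeasure μ₁] [IsProbabilityMeasure μ₂]
    (hμ₁ : μ₁ ≪ lam₁) (hμ₂ : μ₂ ≪ lam₂)
    (hd₁ : MemLp (fun x => (μ₁.rnDeriv lam₁ x).toReal) (ENNReal.ofReal p) lam₁)
    (hd₂ : MemLp (fun y => (μ₂.rnDeriv lam₂ y).toReal) (ENNReal.ofReal p) lam₂)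
    (δ : ℝ) (hδ : 0 < δ)
    (hδ₁ : ∀ᵐ x ∂lam₁, δ ≤ (μ₁.rnDeriv lam₁ x).toReal)
    (hδ₂ : ∀ᵐ y ∂lam₂, δ ≤ (μ₂.rnDeriv lam₂ y).toReal)
    (γ : ℝ) (hγ : 0 < γ)
    (w : ℕ → ↥Ω₁ × ↥Ω₂ → ℝ)
    (hw : ∀ k, MemLp (w k) (ENNReal.ofReal q) (lam₁.prod lam₂))
    (C : ℝ)
    (hC : ∀ k, Gfunctional q γ (lam₁.prod lam₂) μ₁ μ₂ (w k) ≤ C) :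
    (∃ B : ℝ≥0∞, B ≠ ∞ ∧ ∀ k,
      eLpNorm (fun z => max (w k z) 0) (ENNReal.ofReal q) (lam₁.prod lam₂) ≤ B) ∧
    (∃ B : ℝ≥0∞, B ≠ ∞ ∧ ∀ k,
      eLpNorm (fun z => max (-(w k z)) 0) 1 (lam₁.prod lam₂) ≤ B) := by
  have hpq' : p.HolderConjugate q :=
    Real.holderConjugate_iff.mpr ⟨hp, by simpa only [one_div] using hpq⟩
  have hγq : 0 < γ ^ (q - 1) := Real.rpow_pos_of_pos hγ _
  have hm := (memLp_toReal_rnDeriv_prod hμ₁ hμ₂ (by simpa using hpq'.pos) ofReal_ne_top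
    hd₁ hd₂).const_mul (γ ^ (q - 1))
  have hεm := (ae_mul_le_toReal_rnDeriv_prod hμ₁ hμ₂ hδ₁ hδ.le hδ₂).mono fun z hz =>
    mul_le_mul_of_nonneg_left hz hγq.le
  have hbounds k := eLpNorm_posPart_le_and_eLpNorm_negPart_le hpq'
    (mul_pos hγq (mul_pos hδ hδ)) hεm hm (hw k) (hC k)
  exact ⟨⟨_, ofReal_ne_top, fun k => (hbounds k).1⟩, ⟨_, ofReal_ne_top, fun k => (hbounds k).2⟩⟩

/-- Lemma: coercivity of `G`.
In the `L^p` setting, if `G(w_n) ≤ C < ∞` for all `n`, then the positive parts `(w_n)₊` are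
bounded in `L^q(Ω,dλ)` and the negative parts `(w_n)₋` are bounded in `L¹(Ω,dλ)`. -/
theorem G_coercive_bounds
    (n : ℕ) (Ω₁ Ω₂ : Set (Fin n → ℝ)) (hΩ₁ : IsCompact Ω₁) (hΩ₂ : IsCompact Ω₂)
    (lam₁ : Measure ↥Ω₁) (lam₂ : Measure ↥Ω₂)
    [IsFiniteMeasure lam₁] [IsFiniteMeasure lam₂]
    [lam₁.IsOpenPosMeasure] [lam₂.IsOpenPosMeasure]
    (p q : ℝ) (hp : 1 < p) (hpq : 1 / p + 1 / q = 1)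
    (c : ↥Ω₁ × ↥Ω₂ → ℝ) (hc : Continuous c)
    (cdag : ℝ) (hcdag : ∀ z, cdag ≤ c z)
    (μ₁ : Measure ↥Ω₁) (μ₂ : Measure ↥Ω₂)
    [IsProbabilityMeasure μ₁] [IsProbabilityMeasure μ₂]
    (hμ₁ : μ₁ ≪ lam₁) (hμ₂ : μ₂ ≪ lam₂)
    (hd₁ : MemLp (fun x => (μ₁.rnDeriv lam₁ x).toReal) (ENNReal.ofReal p) lam₁)
    (hd₂ : MemLp (fun y => (μ₂.rnDeriv lam₂ y).toReal) (ENNReal.ofReal p) lam₂)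
    (δ : ℝ) (hδ : 0 < δ)
    (hδ₁ : ∀ᵐ x ∂lam₁, δ ≤ (μ₁.rnDeriv lam₁ x).toReal)
    (hδ₂ : ∀ᵐ y ∂lam₂, δ ≤ (μ₂.rnDeriv lam₂ y).toReal)
    (γ : ℝ) (hγ : 0 < γ)
    (w : ℕ → ↥Ω₁ × ↥Ω₂ → ℝ)
    (hw : ∀ k, MemLp (w k) (ENNReal.ofReal q) (lam₁.prod lam₂))
    (C : ℝ) (hCpos : 0 < C)
    (hC : ∀ k, Gfunctional q γ (lam₁.prod lam₂) μ₁ μ₂ (w k) ≤ C) :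
    (∃ B : ℝ≥0∞, B ≠ ∞ ∧ ∀ k,
      eLpNorm (fun z => max (w k z) 0) (ENNReal.ofReal q) (lam₁.prod lam₂) ≤ B) ∧
    (∃ B : ℝ≥0∞, B ≠ ∞ ∧ ∀ k,
      eLpNorm (fun z => max (-(w k z)) 0) 1 (lam₁.prod lam₂) ≤ B) :=
  G_coercive_bounds_general n Ω₁ Ω₂ lam₁ lam₂ p q hp hpq μ₁ μ₂ hμ₁ hμ₂ hd₁ hd₂ δ hδ hδ₁ hδ₂ γ hγ w
    hw C hC
end
end

section
/- In the L^p setting with p ≥ 2, every optimal solution (ᾱ₁, ᾱ₂) ∈ L¹(Ω₁,dλ₁) × L¹(Ω₂,dλ₂) of the variant predual problem (P†) satisfies ᾱ_i ∈ L^q(Ω_i,dλ_i) for i = 1,2; moreover the negative parts (ᾱ_i)₋ are essentially bounded (belong to L^∞(Ω_i,dλ_i)), and the function (1/γ^{q−1})((ᾱ₁⊕ᾱ₂ − c)₊)^{q−1} on Ω has marginal densities dμ₁/dλ₁ and dμ₂/dλ₂, i.e. ∫_{Ω₂}((ᾱ₁⊕ᾱ₂ − c)₊)^{q−1} dλ₂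 = γ^{q−1} dμ₁/dλ₁ λ₁-a.e. and symmetrically for the other marginal. -/
open MeasureTheory Set Filter Topology ENNReal

noncomputable section

/-- Feasibility for the variant predual problem (P†). -/
def PdaggerFeasible {A B : Type*} [MeasurableSpace A] [MeasurableSpace B]
    (q : ℝ) (c : A × B → ℝ) (lam₁ : Measure A) (lam₂ : Measure B)
    (α₁ : A → ℝ) (α₂ : B → ℝ) : Prop :=
  Integrable α₁ lam₁ ∧ Integrable α₂ lam₂ ∧
    MemLp (fun z : A × B => max (α₁ z.1 + α₂ z.2 - c z) 0) (ENNReal.ofReal q)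
      (lam₁.prod lam₂)

/-- Objective `Λ(α₁,α₂)` of the variant predual problem (P†). -/
def LambdaValue {A B : Type*} [MeasurableSpace A] [MeasurableSpace B]
    (q γ : ℝ) (c : A × B → ℝ) (lam : Measure (A × B))
    (μ₁ : Measure A) (μ₂ : Measure B) (α₁ : A → ℝ) (α₂ : B → ℝ) : ℝ :=
  (1 / q) * (∫ z, (max (α₁ z.1 + α₂ z.2 - c z) 0) ^ q ∂lam) -
    γ ^ (q - 1) * (∫ x, α₁ x ∂μ₁) - γ ^ (q - 1) * (∫ y, α₂ y ∂μ₂)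

/-!
Along a perturbation `t ↦ (ᾱ₁ + t g, ᾱ₂)` with `g` bounded, `Λ` is minimal at `t = 0`;
differentiating under the integral gives the Euler–Lagrange equation
`∫ g(x₁) ((ᾱ₁ ⊕ ᾱ₂ - c)₊)^{q-1} d(λ₁ ⊗ λ₂) = γ^{q-1} ∫ g dμ₁`, which for indicators `g` is the
first marginal identity. The second one follows from the symmetry `(x₁, x₂) ↦ (x₂, x₁)` of (P†).

Since the Bochner integral of a non-integrable function is `0`, a minimizer can only exist if every
`λ₁`-integrable function is `μ₁`-integrable, which forces `dμ₁/dλ₁ ≤ R`. The marginal identity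
then bounds `ᾱ₁` above (integrate over a set of positive `λ₂`-measure on which `ᾱ₂` is bounded
below), and, as `dμ₁/dλ₁ ≥ δ > 0`, also below by `c† - ess sup ᾱ₂`. So both potentials are
essentially bounded, which gives every integrability claim.
-/

lemma hasDerivAt_max_zero_rpow {q : ℝ} (hq : 1 < q) (u : ℝ) :
    HasDerivAt (fun v : ℝ => max v 0 ^ q) (q * max u 0 ^ (q - 1)) u := by
  rcases lt_trichotomy u 0 with hu | rfl | hu
  · have hzero : (fun v : ℝ => max v 0 ^ q) =ᶠ[𝓝 u] fun _ => 0 := by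
      filter_upwards [Iio_mem_nhds hu] with v hv
      rw [max_eq_right hv.le, Real.zero_rpow (by linarith)]
    rw [max_eq_right hu.le, Real.zero_rpow (by linarith), mul_zero]
    exact (hasDerivAt_const u 0).congr_of_eventuallyEq hzero
  · -- squeeze between `0` and `|v| ^ q`, whose derivative at `0` vanishes
    have habs := hasDerivAt_abs_rpow 0 hq
    rw [hasDerivAt_iff_isLittleO] at habs ⊢
    simp only [abs_zero, max_self, Real.zero_rpow (by linarith : q ≠ 0),
      Real.zero_rpow (by linarith : q - 1 ≠ 0), mul_zero, sub_zero, smul_zero] at habs ⊢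
    refine (Asymptotics.IsBigO.of_bound 1 (Eventually.of_forall fun v => ?_)).trans_isLittleO habs
    rw [one_mul, Real.norm_of_nonneg (by positivity), Real.norm_of_nonneg (by positivity)]
    exact Real.rpow_le_rpow (le_max_right _ _) (max_le (le_abs_self v) (abs_nonneg v)) (by linarith)
  · have hpow : (fun v : ℝ => max v 0 ^ q) =ᶠ[𝓝 u] fun v => v ^ q := by
      filter_upwards [Ioi_mem_nhds hu] with v hv
      rw [max_eq_left hv.le]
    rw [max_eq_left hu.le]
    exact (Real.hasDerivAt_rpow_const (Or.inl hu.ne')).congr_of_eventuallyEq hpow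

section General

variable {α : Type*} [MeasurableSpace α] {μ : Measure α}

lemma MeasureTheory.MemLp.integrable_rpow_of_le [IsFiniteMeasure μ] {f : α → ℝ} {q r : ℝ}
    (hr : 0 < r) (hrq : r ≤ q) (hf : MemLp f (ENNReal.ofReal q) μ) (hf0 : ∀ x, 0 ≤ f x) :
    Integrable (fun x => f x ^ r) μ := by
  have h := (hf.mono_exponent (ENNReal.ofReal_le_ofReal hrq)).integrable_norm_rpow
    (by simpa using hr) ENNReal.ofReal_ne_top
  rw [ENNReal.toReal_ofReal hr.le] at h
  simpa only [Real.norm_of_nonneg (hf0 _)] using h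

lemma max_add_mul_le {s t g : ℝ} (ht : |t| ≤ 1) (hg : |g| ≤ 1) :
    max (s + t * g) 0 ≤ max s 0 + 1 := by
  have htg : t * g ≤ 1 :=
    (le_abs_self _).trans (abs_mul t g ▸ mul_le_one₀ ht (abs_nonneg g) hg)
  exact max_le (by linarith [le_max_left s 0]) (by linarith [le_max_right s 0])

lemma memLp_max_add_mul [IsFiniteMeasure μ] {S G : α → ℝ} {q t : ℝ}
    (hS : AEStronglyMeasurable S μ) (hSq : MemLp (fun x => max (S x) 0) (ENNReal.ofReal q) μ)
    (hG : AEStronglyMeasurable G μ) (hG1 : ∀ x, |G x| ≤ 1) (ht : |t| ≤ 1) :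
    MemLp (fun x => max (S x + t * G x) 0) (ENNReal.ofReal q) μ := by
  refine (hSq.add (memLp_const 1)).of_le
    ((continuous_id.max continuous_const).comp_aestronglyMeasurable (hS.add (hG.const_mul t)))
    (Eventually.of_forall fun x => ?_)
  rw [Pi.add_apply, Real.norm_of_nonneg (le_max_right _ _), Real.norm_of_nonneg (by positivity)]
  exact max_add_mul_le ht (hG1 x)

theorem hasDerivAt_integral_max_add_mul_rpow [IsFiniteMeasure μ] {S G : α → ℝ} {q : ℝ}
    (hq : 1 < q) (hS : AEStronglyMeasurable S μ)
    (hSq : MemLp (fun x => max (S x) 0) (ENNReal.ofReal q) μ)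
    (hG : AEStronglyMeasurable G μ) (hG1 : ∀ x, |G x| ≤ 1) :
    HasDerivAt (fun t => ∫ x, max (S x + t * G x) 0 ^ q ∂μ)
      (q * ∫ x, G x * max (S x) 0 ^ (q - 1) ∂μ) 0 := by
  have hψ : Continuous fun v : ℝ => max v 0 ^ q :=
    (Real.continuous_rpow_const (by linarith)).comp (continuous_id.max continuous_const)
  have hψ' : Continuous fun v : ℝ => max v 0 ^ (q - 1) :=
    (Real.continuous_rpow_const (by linarith)).comp (continuous_id.max continuous_const)
  have hbound : Integrable (fun x => q * (max (S x) 0 + 1) ^ (q - 1)) μ :=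
    ((hSq.add (memLp_const 1)).integrable_rpow_of_le (by linarith) (by linarith)
      fun x => add_nonneg (le_max_right _ _) zero_le_one).const_mul q
  have hderiv := hasDerivAt_integral_of_dominated_loc_of_deriv_le (μ := μ)
    (F := fun t x => max (S x + t * G x) 0 ^ q)
    (F' := fun t x => q * (G x * max (S x + t * G x) 0 ^ (q - 1)))
    (Metric.ball_mem_nhds (0 : ℝ) one_pos)
    (Eventually.of_forall fun t => hψ.comp_aestronglyMeasurable (hS.add (hG.const_mul t)))
    (by simpa using (hSq.integrable_rpow_of_le (by linarith) le_rfl fun x => le_max_right _ _))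
    ((hG.mul (hψ'.comp_aestronglyMeasurable (hS.add (hG.const_mul 0)))).const_mul q)
    (Eventually.of_forall fun x t ht => ?_) hbound
    (Eventually.of_forall fun x t _ => ?_)
  · simpa [integral_const_mul] using hderiv.2
  · have ht1 : |t| ≤ 1 := by simpa using (Metric.mem_ball.mp ht).le
    have hb : 0 ≤ max (S x + t * G x) 0 := le_max_right _ _
    rw [Real.norm_eq_abs, abs_mul, abs_mul, abs_of_pos (by linarith : 0 < q),
      abs_of_nonneg (Real.rpow_nonneg hb _)]
    gcongr
    calc |G x| * max (S x + t * G x) 0 ^ (q - 1) ≤ 1 * max (S x + t * G x) 0 ^ (q - 1) := by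
          gcongr; exact hG1 x
      _ ≤ (max (S x) 0 + 1) ^ (q - 1) := by
          rw [one_mul]; gcongr; exact max_add_mul_le ht1 (hG1 x)
  · have := (hasDerivAt_max_zero_rpow hq (S x + t * G x)).comp t
      (((hasDerivAt_id t).mul_const (G x)).const_add (S x))
    exact this.congr_deriv (by ring)

lemma exists_measure_ne_zero_ae_restrict_le {f : α → ℝ} (hf : AEMeasurable f μ) (hμ : μ ≠ 0) :
    ∃ K : ℝ, ∃ s : Set α, μ s ≠ 0 ∧ ∀ᵐ y ∂μ.restrict s, K ≤ f y := by
  obtain ⟨n, hn⟩ : ∃ n : ℕ, μ {y | -(n : ℝ) ≤ f y} ≠ 0 := by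
    by_contra! hnull
    refine hμ (Measure.measure_univ_eq_zero.mp (measure_mono_null (fun y _ => ?_)
      (measure_iUnion_null hnull)))
    obtain ⟨n, hn⟩ := exists_nat_ge (-f y)
    exact mem_iUnion.mpr ⟨n, show -(n : ℝ) ≤ f y by linarith⟩
  exact ⟨-n, _, hn, ae_restrict_mem₀ (nullMeasurableSet_le aemeasurable_const hf)⟩

lemma le_of_integral_max_rpow_le [IsFiniteMeasure μ] {F : α → ℝ} {r u D : ℝ} (hr : 0 < r)
    {s : Set α} (hs : μ s ≠ 0) (hsF : ∀ᵐ y ∂μ.restrict s, u ≤ F y)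
    (hF : Integrable (fun y => max (F y) 0 ^ r) μ) (hD : ∫ y, max (F y) 0 ^ r ∂μ ≤ D) :
    u ≤ (D / μ.real s) ^ r⁻¹ := by
  have hs_pos : 0 < μ.real s := ENNReal.toReal_pos hs (measure_ne_top μ s)
  have hθ : max u 0 ^ r * μ.real s ≤ D := calc
    max u 0 ^ r * μ.real s = ∫ _ in s, max u 0 ^ r ∂μ := by
      rw [setIntegral_const, smul_eq_mul, mul_comm]
    _ ≤ ∫ y in s, max (F y) 0 ^ r ∂μ := by
      refine integral_mono_ae (integrable_const _) hF.integrableOn ?_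
      filter_upwards [hsF] with y hy
      exact Real.rpow_le_rpow (le_max_right _ _) (max_le_max hy le_rfl) hr.le
    _ ≤ ∫ y, max (F y) 0 ^ r ∂μ :=
      setIntegral_le_integral hF (Eventually.of_forall fun _ => by positivity)
    _ ≤ D := hD
  have hD0 : 0 ≤ D / μ.real s := div_nonneg ((by positivity : (0 : ℝ) ≤ _).trans hθ) hs_pos.le
  calc u ≤ max u 0 := le_max_left _ _
    _ ≤ (D / μ.real s) ^ r⁻¹ :=
      (Real.le_rpow_inv_iff_of_pos (le_max_right _ _) hD0 hr).mpr ((le_div_iff₀ hs_pos).mpr hθ)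

lemma pos_of_integral_max_rpow_pos {F : α → ℝ} {r u : ℝ} (hr : 0 < r)
    (hF : ∀ᵐ y ∂μ, F y ≤ u) (hpos : 0 < ∫ y, max (F y) 0 ^ r ∂μ) : 0 < u := by
  by_contra! hu
  refine hpos.ne' (integral_eq_zero_of_ae ?_)
  filter_upwards [hF] with y hy
  rw [max_eq_right (hy.trans hu), Pi.zero_apply, Real.zero_rpow hr.ne']

lemma memLp_top_of_ae_le_of_ae_le {f : α → ℝ} (hf : AEStronglyMeasurable f μ) {L U : ℝ}
    (hL : ∀ᵐ x ∂μ, L ≤ f x) (hU : ∀ᵐ x ∂μ, f x ≤ U) : MemLp f ∞ μ :=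
  memLp_top_of_bound hf (max |L| |U|) <| by
    filter_upwards [hL, hU] with x hLx hUx
    rw [Real.norm_eq_abs, abs_le]
    constructor <;> linarith [neg_abs_le L, le_abs_self U, le_max_left |L| |U|,
      le_max_right |L| |U|]

theorem MeasureTheory.Measure.exists_ae_toReal_rnDeriv_le_of_integrable {ν : Measure α}
    [IsFiniteMeasure μ] [IsFiniteMeasure ν] (hμν : μ ≪ ν)
    (h : ∀ f : α → ℝ, Integrable f ν → Integrable f μ) :
    ∃ R : ℝ, ∀ᵐ x ∂ν, (μ.rnDeriv ν x).toReal ≤ R := by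
  by_contra hunb
  set ρ := μ.rnDeriv ν
  set A : ℕ → Set α := fun k => {x | 4 ^ k < ρ x}
  have hAm : ∀ k, MeasurableSet (A k) := fun k =>
    measurableSet_lt measurable_const (Measure.measurable_rnDeriv μ ν)
  have hA : ∀ k, ν (A k) ≠ 0 := fun k h0 => hunb ⟨4 ^ k, by
    filter_upwards [measure_eq_zero_iff_ae_notMem.mp h0] with x hx
    simpa using ENNReal.toReal_mono (by simp) (not_lt.mp hx)⟩
  -- `H` has `ν`-integral `∑ 2⁻ᵏ`, but `μ`-integral at least `2ᵏ` for every `k` as `ρ > 4ᵏ` on `A k`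
  set H : α → ℝ≥0∞ := fun x => ∑' k, (A k).indicator (fun _ => 2⁻¹ ^ k / ν (A k)) x
  have hHm : Measurable H := Measurable.tsum fun k => measurable_const.indicator (hAm k)
  have hHν : ∫⁻ x, H x ∂ν ≠ ∞ := by
    rw [lintegral_tsum fun k => (measurable_const.indicator (hAm k)).aemeasurable]
    simp only [lintegral_indicator_const (hAm _),
      ENNReal.div_mul_cancel (hA _) (measure_ne_top ν _), ENNReal.tsum_geometric]
    simp
  have hHμ : ∀ k : ℕ, 2 ^ k ≤ ∫⁻ x, H x ∂μ := fun k => calc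
    (2 : ℝ≥0∞) ^ k = 2⁻¹ ^ k / ν (A k) * (4 ^ k * ν (A k)) := by
      rw [mul_left_comm, ENNReal.div_mul_cancel (hA k) (measure_ne_top _ _), ← mul_pow,
        show (4 : ℝ≥0∞) = 2 * 2 by norm_num, mul_assoc,
        ENNReal.mul_inv_cancel two_ne_zero ENNReal.ofNat_ne_top, mul_one]
    _ ≤ 2⁻¹ ^ k / ν (A k) * μ (A k) := by
      gcongr
      rw [← Measure.setLIntegral_rnDeriv hμν, ← setLIntegral_const]
      exact setLIntegral_mono (Measure.measurable_rnDeriv μ ν) fun x hx => hx.le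
    _ = ∫⁻ x, (A k).indicator (fun _ => 2⁻¹ ^ k / ν (A k)) x ∂μ :=
      (lintegral_indicator_const (hAm k) _).symm
    _ ≤ ∫⁻ x, H x ∂μ :=
      lintegral_mono fun x => ENNReal.le_tsum (f := fun k => (A k).indicator _ x) k
  have hHμ_top : ∫⁻ x, H x ∂μ = ∞ :=
    top_le_iff.mp (le_of_tendsto' (ENNReal.tendsto_pow_atTop_nhds_top_iff.mpr one_lt_two) hHμ)
  have hHfin : ∀ᵐ x ∂μ, H x ≠ ∞ := by
    filter_upwards [hμν.ae_le (ae_lt_top hHm hHν)] with x hx using hx.ne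
  exact (integrable_toReal_iff hHm.aemeasurable hHfin).mp
    (h _ (integrable_toReal_of_lintegral_ne_top hHm.aemeasurable hHν)) hHμ_top

end General

section Pdagger

variable {A B : Type*} [MeasurableSpace A] [MeasurableSpace B]
  {lam₁ : Measure A} {lam₂ : Measure B} {μ₁ : Measure A} {μ₂ : Measure B}
  {q γ : ℝ} {c : A × B → ℝ} {a₁ : A → ℝ} {a₂ : B → ℝ}

def IsPdaggerMinimizer (q γ : ℝ) (c : A × B → ℝ) (lam₁ : Measure A) (lam₂ : Measure B)
    (μ₁ : Measure A) (μ₂ : Measure B) (a₁ : A → ℝ) (a₂ : B → ℝ) : Prop :=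
  PdaggerFeasible q c lam₁ lam₂ a₁ a₂ ∧
    ∀ α₁ α₂, PdaggerFeasible q c lam₁ lam₂ α₁ α₂ →
      LambdaValue q γ c (lam₁.prod lam₂) μ₁ μ₂ a₁ a₂ ≤
        LambdaValue q γ c (lam₁.prod lam₂) μ₁ μ₂ α₁ α₂

lemma PdaggerFeasible.swap [SFinite lam₁] [SFinite lam₂]
    (h : PdaggerFeasible q c lam₁ lam₂ a₁ a₂) :
    PdaggerFeasible q (fun z => c z.swap) lam₂ lam₁ a₂ a₁ := by
  refine ⟨h.2.1, h.1, ?_⟩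
  simpa only [Function.comp_def, Prod.fst_swap, Prod.snd_swap, add_comm] using
    h.2.2.comp_measurePreserving Measure.measurePreserving_swap

lemma lambdaValue_swap [SFinite lam₁] [SFinite lam₂] :
    LambdaValue q γ (fun z => c z.swap) (lam₂.prod lam₁) μ₂ μ₁ a₂ a₁ =
      LambdaValue q γ c (lam₁.prod lam₂) μ₁ μ₂ a₁ a₂ := by
  have := integral_prod_swap (μ := lam₁) (ν := lam₂)
    fun z => max (a₁ z.1 + a₂ z.2 - c z) 0 ^ q
  simp only [LambdaValue, Prod.fst_swap, Prod.snd_swap, add_comm (a₁ _)] at this ⊢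
  rw [this]
  ring

lemma IsPdaggerMinimizer.swap [SFinite lam₁] [SFinite lam₂]
    (h : IsPdaggerMinimizer q γ c lam₁ lam₂ μ₁ μ₂ a₁ a₂) :
    IsPdaggerMinimizer q γ (fun z => c z.swap) lam₂ lam₁ μ₂ μ₁ a₂ a₁ :=
  ⟨h.1.swap, fun α₂ α₁ hα => by
    simpa only [lambdaValue_swap] using h.2 α₁ α₂ hα.swap⟩

variable [IsFiniteMeasure lam₁] [IsFiniteMeasure lam₂] [IsFiniteMeasure μ₁]
  [IsProbabilityMeasure μ₂]

theorem IsPdaggerMinimizer.integrable_of_integrable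
    (h : IsPdaggerMinimizer q γ c lam₁ lam₂ μ₁ μ₂ a₁ a₂)
    (hq : 0 < q) (hγ : 0 < γ) {cd : ℝ} (hcd : ∀ z, cd ≤ c z) (hμ₁ : μ₁ ≪ lam₁)
    {f : A → ℝ} (hf : Integrable f lam₁) : Integrable f μ₁ := by
  by_contra hfμ
  set L := LambdaValue q γ c (lam₁.prod lam₂) μ₁ μ₂ a₁ a₂
  set s := (|L| + 1) / γ ^ (q - 1)
  have hγq : 0 < γ ^ (q - 1) := Real.rpow_pos_of_pos hγ _
  have hzero : (fun z : A × B => max ((cd - s - |f z.1|) + s - c z) 0) = 0 := by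
    funext z
    exact max_eq_right (by linarith [hcd z, abs_nonneg (f z.1)])
  have hfeas : PdaggerFeasible q c lam₁ lam₂ (fun x => cd - s - |f x|) (fun _ => s) :=
    ⟨(integrable_const _).sub hf.abs, integrable_const _, hzero ▸ MemLp.zero⟩
  -- the Bochner integral of a non-integrable function is `0`, so this competitor has `Λ = -(|L|+1)`
  have hjunk : ∫ x, (cd - s - |f x|) ∂μ₁ = 0 := by
    refine integral_undef fun hi => hfμ ?_
    have habs : Integrable (fun x => |f x|) μ₁ :=
      ((integrable_const (cd - s)).sub hi).congr (Eventually.of_forall fun x => by simp)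
    exact (integrable_norm_iff (hf.1.mono_ac hμ₁)).mp habs
  have hval : LambdaValue q γ c (lam₁.prod lam₂) μ₁ μ₂ (fun x => cd - s - |f x|) (fun _ => s) =
      -(|L| + 1) := by
    have hpow : ∀ z : A × B, max ((cd - s - |f z.1|) + s - c z) 0 ^ q = 0 := fun z => by
      rw [congrFun hzero z, Pi.zero_apply, Real.zero_rpow hq.ne']
    have hs : γ ^ (q - 1) * s = |L| + 1 := mul_div_cancel₀ _ hγq.ne'
    simp only [LambdaValue, hpow, integral_zero, hjunk, integral_const, probReal_univ, one_smul]
    linarith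
  have := h.2 _ _ hfeas
  rw [hval] at this
  linarith [neg_abs_le L]

theorem IsPdaggerMinimizer.integral_mul_max_rpow_eq
    (h : IsPdaggerMinimizer q γ c lam₁ lam₂ μ₁ μ₂ a₁ a₂) (hq : 1 < q) (hγ : 0 < γ)
    {cd : ℝ} (hcd : ∀ z, cd ≤ c z) (hc : AEStronglyMeasurable c (lam₁.prod lam₂))
    (hμ₁ : μ₁ ≪ lam₁) {g : A → ℝ} (hg : Measurable g) (hg1 : ∀ x, |g x| ≤ 1) :
    ∫ z, g z.1 * max (a₁ z.1 + a₂ z.2 - c z) 0 ^ (q - 1) ∂(lam₁.prod lam₂) =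
      γ ^ (q - 1) * ∫ x, g x ∂μ₁ := by
  have hq0 : 0 < q := by linarith
  set S : A × B → ℝ := fun z => a₁ z.1 + a₂ z.2 - c z
  have hS : AEStronglyMeasurable S (lam₁.prod lam₂) :=
    ((h.1.1.1.comp_quasiMeasurePreserving Measure.quasiMeasurePreserving_fst).add
      (h.1.2.1.1.comp_quasiMeasurePreserving Measure.quasiMeasurePreserving_snd)).sub hc
  have hG : AEStronglyMeasurable (fun z : A × B => g z.1) (lam₁.prod lam₂) :=
    (hg.comp measurable_fst).aestronglyMeasurable
  have hg_int : Integrable g lam₁ :=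
    (integrable_const (1 : ℝ)).mono' hg.aestronglyMeasurable (Eventually.of_forall hg1)
  have hgμ := h.integrable_of_integrable hq0 hγ hcd hμ₁ hg_int
  have ha₁μ := h.integrable_of_integrable hq0 hγ hcd hμ₁ h.1.1
  set φ : ℝ → ℝ := fun t =>
    LambdaValue q γ c (lam₁.prod lam₂) μ₁ μ₂ (fun x => a₁ x + t * g x) a₂
  have hφ : φ = fun t => 1 / q * ∫ z, max (S z + t * g z.1) 0 ^ q ∂(lam₁.prod lam₂) -
      γ ^ (q - 1) * (∫ x, a₁ x ∂μ₁ + t * ∫ x, g x ∂μ₁) - γ ^ (q - 1) * ∫ y, a₂ y ∂μ₂ := by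
    funext t
    simp only [φ, S, LambdaValue, integral_add ha₁μ (hgμ.const_mul t), integral_const_mul,
      add_right_comm _ (t * _), sub_add_eq_add_sub]
  have hmin : IsLocalMin φ 0 := by
    filter_upwards [Metric.ball_mem_nhds (0 : ℝ) one_pos] with t ht
    have ht1 : |t| ≤ 1 := by simpa using (Metric.mem_ball.mp ht).le
    have hfeas : PdaggerFeasible q c lam₁ lam₂ (fun x => a₁ x + t * g x) a₂ := by
      refine ⟨h.1.1.add (hg_int.const_mul t), h.1.2.1, ?_⟩
      simpa only [S, add_right_comm _ (t * _), sub_add_eq_add_sub] using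
        memLp_max_add_mul hS h.1.2.2 hG (fun z => hg1 z.1) ht1
    simpa only [φ, zero_mul, add_zero] using h.2 _ _ hfeas
  have hderiv : HasDerivAt φ
      (1 / q * (q * ∫ z, g z.1 * max (S z) 0 ^ (q - 1) ∂(lam₁.prod lam₂)) -
        γ ^ (q - 1) * (1 * ∫ x, g x ∂μ₁)) 0 := by
    rw [hφ]
    exact (((hasDerivAt_integral_max_add_mul_rpow hq hS h.1.2.2 hG fun z => hg1 z.1).const_mul
      _).sub ((((hasDerivAt_id 0).mul_const _).const_add _).const_mul _)).sub_const _
  have := hmin.hasDerivAt_eq_zero hderiv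
  field_simp at this
  linarith

theorem IsPdaggerMinimizer.ae_integral_max_rpow_eq
    (h : IsPdaggerMinimizer q γ c lam₁ lam₂ μ₁ μ₂ a₁ a₂) (hq : 1 < q) (hγ : 0 < γ)
    {cd : ℝ} (hcd : ∀ z, cd ≤ c z) (hc : AEStronglyMeasurable c (lam₁.prod lam₂))
    (hμ₁ : μ₁ ≪ lam₁) :
    ∀ᵐ x₁ ∂lam₁, ∫ x₂, max (a₁ x₁ + a₂ x₂ - c (x₁, x₂)) 0 ^ (q - 1) ∂lam₂ =
      γ ^ (q - 1) * (μ₁.rnDeriv lam₁ x₁).toReal := by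
  set T : A × B → ℝ := fun z => max (a₁ z.1 + a₂ z.2 - c z) 0 ^ (q - 1)
  have hT : Integrable T (lam₁.prod lam₂) :=
    h.1.2.2.integrable_rpow_of_le (by linarith) (by linarith) fun _ => le_max_right _ _
  refine Integrable.ae_eq_of_forall_setIntegral_eq _ _ hT.integral_prod_left
    (Measure.integrable_toReal_rnDeriv.const_mul _) fun s hs _ => ?_
  have hind : ∀ x, |s.indicator (1 : A → ℝ) x| ≤ 1 := fun x => by
    by_cases hx : x ∈ s <;> simp [hx]
  have hEL := h.integral_mul_max_rpow_eq hq hγ hcd hc hμ₁ (measurable_one.indicator hs) hind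
  have hprod : (fun z : A × B => s.indicator 1 z.1 * T z) = (s ×ˢ univ).indicator T := by
    funext z
    by_cases hz : z.1 ∈ s <;> simp [hz]
  rw [hprod, integral_indicator (hs.prod MeasurableSet.univ),
    setIntegral_prod _ hT.integrableOn, integral_indicator_one hs] at hEL
  simpa only [Measure.restrict_univ, integral_const_mul,
    Measure.setIntegral_toReal_rnDeriv' hμ₁ hs] using hEL

theorem IsPdaggerMinimizer.exists_ae_le
    (h : IsPdaggerMinimizer q γ c lam₁ lam₂ μ₁ μ₂ a₁ a₂) (hq : 1 < q) (hγ : 0 < γ)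
    {cd C : ℝ} (hcd : ∀ z, cd ≤ c z) (hcC : ∀ z, c z ≤ C)
    (hc : AEStronglyMeasurable c (lam₁.prod lam₂)) (hμ₁ : μ₁ ≪ lam₁) (hμ₂ : μ₂ ≪ lam₂) :
    ∃ M, ∀ᵐ x ∂lam₁, a₁ x ≤ M := by
  obtain ⟨R, hR⟩ := Measure.exists_ae_toReal_rnDeriv_le_of_integrable hμ₁
    fun _ => h.integrable_of_integrable (by linarith) hγ hcd hμ₁
  have hlam₂ : lam₂ ≠ 0 := fun h0 =>
    IsProbabilityMeasure.ne_zero μ₂ (Measure.absolutelyContinuous_zero_iff.mp (h0 ▸ hμ₂))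
  obtain ⟨K, s, hs, hKs⟩ := exists_measure_ne_zero_ae_restrict_le h.1.2.1.aemeasurable hlam₂
  have hT : Integrable (fun z : A × B => max (a₁ z.1 + a₂ z.2 - c z) 0 ^ (q - 1))
      (lam₁.prod lam₂) :=
    h.1.2.2.integrable_rpow_of_le (by linarith) (by linarith) fun _ => le_max_right _ _
  refine ⟨C - K + (γ ^ (q - 1) * R / lam₂.real s) ^ (q - 1)⁻¹, ?_⟩
  filter_upwards [h.ae_integral_max_rpow_eq hq hγ hcd hc hμ₁, hR, hT.prod_right_ae]
    with x hx hRx hTx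
  have hγq : 0 < γ ^ (q - 1) := Real.rpow_pos_of_pos hγ _
  have := le_of_integral_max_rpow_le (u := a₁ x + K - C) (by linarith) hs
    (hKs.mono fun y hy => by linarith [hcC (x, y)]) hTx
    (hx.trans_le (mul_le_mul_of_nonneg_left hRx hγq.le))
  linarith

theorem IsPdaggerMinimizer.ae_sub_le_of_ae_le
    (h : IsPdaggerMinimizer q γ c lam₁ lam₂ μ₁ μ₂ a₁ a₂) (hq : 1 < q) (hγ : 0 < γ)
    {cd : ℝ} (hcd : ∀ z, cd ≤ c z) (hc : AEStronglyMeasurable c (lam₁.prod lam₂))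
    (hμ₁ : μ₁ ≪ lam₁) {δ M : ℝ} (hδ : 0 < δ)
    (hδ₁ : ∀ᵐ x ∂lam₁, δ ≤ (μ₁.rnDeriv lam₁ x).toReal) (hM : ∀ᵐ y ∂lam₂, a₂ y ≤ M) :
    ∀ᵐ x ∂lam₁, cd - M ≤ a₁ x := by
  filter_upwards [h.ae_integral_max_rpow_eq hq hγ hcd hc hμ₁, hδ₁] with x hx hδx
  have hγq : 0 < γ ^ (q - 1) := Real.rpow_pos_of_pos hγ _
  have := pos_of_integral_max_rpow_pos (F := fun y => a₁ x + a₂ y - c (x, y))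
    (r := q - 1) (u := a₁ x + M - cd) (by linarith) (hM.mono fun y hy => by linarith [hcd (x, y)])
    (by rw [hx]; exact mul_pos hγq (hδ.trans_le hδx))
  linarith

end Pdagger

theorem Pdagger_solution_regularity_general
    (n : ℕ) (Ω₁ Ω₂ : Set (Fin n → ℝ)) (hΩ₁ : IsCompact Ω₁) (hΩ₂ : IsCompact Ω₂)
    (lam₁ : Measure ↥Ω₁) (lam₂ : Measure ↥Ω₂)
    [IsFiniteMeasure lam₁] [IsFiniteMeasure lam₂]
    (p q : ℝ) (hp : 2 ≤ p) (hpq : 1 / p + 1 / q = 1)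
    (c : ↥Ω₁ × ↥Ω₂ → ℝ) (hc : Continuous c)
    (cdag : ℝ) (hcdag : ∀ z, cdag ≤ c z)
    (μ₁ : Measure ↥Ω₁) (μ₂ : Measure ↥Ω₂)
    [IsProbabilityMeasure μ₁] [IsProbabilityMeasure μ₂]
    (hμ₁ : μ₁ ≪ lam₁) (hμ₂ : μ₂ ≪ lam₂)
    (δ : ℝ) (hδ : 0 < δ)
    (hδ₁ : ∀ᵐ x ∂lam₁, δ ≤ (μ₁.rnDeriv lam₁ x).toReal)
    (hδ₂ : ∀ᵐ y ∂lam₂, δ ≤ (μ₂.rnDeriv lam₂ y).toReal)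
    (γ : ℝ) (hγ : 0 < γ)
    (a₁ : ↥Ω₁ → ℝ) (a₂ : ↥Ω₂ → ℝ)
    (hfeas : PdaggerFeasible q c lam₁ lam₂ a₁ a₂)
    (hopt : ∀ (α₁ : ↥Ω₁ → ℝ) (α₂ : ↥Ω₂ → ℝ), PdaggerFeasible q c lam₁ lam₂ α₁ α₂ →
      LambdaValue q γ c (lam₁.prod lam₂) μ₁ μ₂ a₁ a₂ ≤
        LambdaValue q γ c (lam₁.prod lam₂) μ₁ μ₂ α₁ α₂) :
    MemLp a₁ (ENNReal.ofReal q) lam₁ ∧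
    MemLp a₂ (ENNReal.ofReal q) lam₂ ∧
    MemLp (fun x => max (-(a₁ x)) 0) ∞ lam₁ ∧
    MemLp (fun y => max (-(a₂ y)) 0) ∞ lam₂ ∧
    (∀ᵐ x₁ ∂lam₁,
      ∫ x₂, (max (a₁ x₁ + a₂ x₂ - c (x₁, x₂)) 0) ^ (q - 1) ∂lam₂ =
        γ ^ (q - 1) * (μ₁.rnDeriv lam₁ x₁).toReal) ∧
    (∀ᵐ x₂ ∂lam₂,
      ∫ x₁, (max (a₁ x₁ + a₂ x₂ - c (x₁, x₂)) 0) ^ (q - 1) ∂lam₁ =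
        γ ^ (q - 1) * (μ₂.rnDeriv lam₂ x₂).toReal) := by
  have hq : 1 < q := (Real.holderConjugate_iff (p := p) (q := q)).mpr
    ⟨by linarith, by simpa only [one_div] using hpq⟩ |>.symm.lt
  have h : IsPdaggerMinimizer q γ c lam₁ lam₂ μ₁ μ₂ a₁ a₂ := ⟨hfeas, hopt⟩
  have hcm : AEStronglyMeasurable c (lam₁.prod lam₂) := hc.aestronglyMeasurable
  have hcm' : AEStronglyMeasurable (fun z => c z.swap) (lam₂.prod lam₁) :=
    (hc.comp continuous_swap).aestronglyMeasurable
  have : CompactSpace Ω₁ := isCompact_iff_compactSpace.mp hΩ₁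
  have : CompactSpace Ω₂ := isCompact_iff_compactSpace.mp hΩ₂
  obtain ⟨C, hC⟩ := (isCompact_range hc).bddAbove
  have hcC : ∀ z, c z ≤ C := fun z => hC (mem_range_self z)
  obtain ⟨M₁, hM₁⟩ := h.exists_ae_le hq hγ hcdag hcC hcm hμ₁ hμ₂
  obtain ⟨M₂, hM₂⟩ := h.swap.exists_ae_le hq hγ (fun z => hcdag z.swap) (fun z => hcC z.swap)
    hcm' hμ₂ hμ₁
  have ha₁ := memLp_top_of_ae_le_of_ae_le hfeas.1.1
    (h.ae_sub_le_of_ae_le hq hγ hcdag hcm hμ₁ hδ hδ₁ hM₂) hM₁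
  have ha₂ := memLp_top_of_ae_le_of_ae_le hfeas.2.1.1
    (h.swap.ae_sub_le_of_ae_le hq hγ (fun z => hcdag z.swap) hcm' hμ₂ hδ hδ₂ hM₁) hM₂
  refine ⟨ha₁.mono_exponent le_top, ha₂.mono_exponent le_top, ha₁.neg_part, ha₂.neg_part,
    h.ae_integral_max_rpow_eq hq hγ hcdag hcm hμ₁, ?_⟩
  simpa only [add_comm (a₂ _), Prod.swap_prod_mk] using
    h.swap.ae_integral_max_rpow_eq hq hγ (fun z => hcdag z.swap) hcm' hμ₂

/-- Theorem: regularity of solutions of (P†) for `p ≥ 2`.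
In the `L^p` setting with `p ≥ 2`, every optimal solution `(ᾱ₁, ᾱ₂)` of (P†) satisfies
`ᾱ_i ∈ L^q(Ω_i,dλ_i)`, the negative parts are essentially bounded, and
`γ^{1−q}((ᾱ₁ ⊕ ᾱ₂ − c)₊)^{q−1}` has the marginal densities `dμ_i/dλ_i`. -/
theorem Pdagger_solution_regularity
    (n : ℕ) (Ω₁ Ω₂ : Set (Fin n → ℝ)) (hΩ₁ : IsCompact Ω₁) (hΩ₂ : IsCompact Ω₂)
    (lam₁ : Measure ↥Ω₁) (lam₂ : Measure ↥Ω₂)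
    [IsFiniteMeasure lam₁] [IsFiniteMeasure lam₂]
    [lam₁.IsOpenPosMeasure] [lam₂.IsOpenPosMeasure]
    (p q : ℝ) (hp : 2 ≤ p) (hpq : 1 / p + 1 / q = 1)
    (c : ↥Ω₁ × ↥Ω₂ → ℝ) (hc : Continuous c)
    (cdag : ℝ) (hcdag : ∀ z, cdag ≤ c z)
    (μ₁ : Measure ↥Ω₁) (μ₂ : Measure ↥Ω₂)
    [IsProbabilityMeasure μ₁] [IsProbabilityMeasure μ₂]
    (hμ₁ : μ₁ ≪ lam₁) (hμ₂ : μ₂ ≪ lam₂)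
    (hd₁ : MemLp (fun x => (μ₁.rnDeriv lam₁ x).toReal) (ENNReal.ofReal p) lam₁)
    (hd₂ : MemLp (fun y => (μ₂.rnDeriv lam₂ y).toReal) (ENNReal.ofReal p) lam₂)
    (δ : ℝ) (hδ : 0 < δ)
    (hδ₁ : ∀ᵐ x ∂lam₁, δ ≤ (μ₁.rnDeriv lam₁ x).toReal)
    (hδ₂ : ∀ᵐ y ∂lam₂, δ ≤ (μ₂.rnDeriv lam₂ y).toReal)
    (γ : ℝ) (hγ : 0 < γ)
    (a₁ : ↥Ω₁ → ℝ) (a₂ : ↥Ω₂ → ℝ)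
    (hfeas : PdaggerFeasible q c lam₁ lam₂ a₁ a₂)
    (hopt : ∀ (α₁ : ↥Ω₁ → ℝ) (α₂ : ↥Ω₂ → ℝ), PdaggerFeasible q c lam₁ lam₂ α₁ α₂ →
      LambdaValue q γ c (lam₁.prod lam₂) μ₁ μ₂ a₁ a₂ ≤
        LambdaValue q γ c (lam₁.prod lam₂) μ₁ μ₂ α₁ α₂) :
    MemLp a₁ (ENNReal.ofReal q) lam₁ ∧
    MemLp a₂ (ENNReal.ofReal q) lam₂ ∧
    MemLp (fun x => max (-(a₁ x)) 0) ∞ lam₁ ∧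
    MemLp (fun y => max (-(a₂ y)) 0) ∞ lam₂ ∧
    (∀ᵐ x₁ ∂lam₁,
      ∫ x₂, (max (a₁ x₁ + a₂ x₂ - c (x₁, x₂)) 0) ^ (q - 1) ∂lam₂ =
        γ ^ (q - 1) * (μ₁.rnDeriv lam₁ x₁).toReal) ∧
    (∀ᵐ x₂ ∂lam₂,
      ∫ x₁, (max (a₁ x₁ + a₂ x₂ - c (x₁, x₂)) 0) ^ (q - 1) ∂lam₁ =
        γ ^ (q - 1) * (μ₂.rnDeriv lam₂ x₂).toReal) :=
  Pdagger_solution_regularity_general n Ω₁ Ω₂ hΩ₁ hΩ₂ lam₁ lam₂ p q hp hpq c hc cdag hcdag μ₁ μ₂ hμ₁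
    hμ₂ δ hδ hδ₁ hδ₂ γ hγ a₁ a₂ hfeas hopt
end
end
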